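/- arXiv:2502.09221 — 7 statements merged into one kernel-verified Lean document; each statement's English description precedes it below -/
import Mathlib

section
/- Every trelational-minimal model of an EASP program Π is also a tfunctional-minimal model of Π. -/
attribute [local instance] Classical.propDecidable

namespace EASP

/-- Valuations over a countable set of atoms (atoms = ℕ). -/
abbrev Val := Set ℕ

/-- EASP literals: objective atoms `obj p`, and subjective literals `K p`, `K̂ p`. -/
inductive Lit : Type where
  | obj : ℕ → Lit
  | k : ℕ → Lit
  | khat : ℕ → Lit

/-- Body conjuncts: a literal, a `not`-negated literal, or the constants ⊤ / ⊥. -/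
inductive BLit : Type where
  | pos : Lit → BLit
  | neg : Lit → BLit
  | top : BLit
  | bot : BLit

/-- An EASP rule: head is a disjunction of literals (⊥ if empty),
body is a conjunction of body conjuncts. -/
structure Rule : Type where
  head : List Lit
  body : List BLit

/-- An EASP program: a finite collection of rules. -/
abbrev Program := List Rule

/-- Pointed S5 satisfaction of a literal, where the collection of worlds is given
as an indexed family (multiset view): `K p` iff `p` is in every member of the family,
`K̂ p` iff `p` is in some member. -/
def famSatLit {ι : Type} (W : ι → Val) (T : Val) : Lit → Prop
  | .obj p => p ∈ T
  | .k p => ∀ i, p ∈ W i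
  | .khat p => ∃ i, p ∈ W i

def famSatB {ι : Type} (W : ι → Val) (T : Val) : BLit → Prop
  | .pos l => famSatLit W T l
  | .neg l => ¬ famSatLit W T l
  | .top => True
  | .bot => False

def famSatRule {ι : Type} (W : ι → Val) (T : Val) (r : Rule) : Prop :=
  (∀ b ∈ r.body, famSatB W T b) → ∃ l ∈ r.head, famSatLit W T l

def famSatProg {ι : Type} (W : ι → Val) (T : Val) (P : Program) : Prop :=
  ∀ r ∈ P, famSatRule W T r

/-- Pointed S5 satisfaction of a literal, set-based collection of worlds. -/
def setSatLit (M : Set Val) (T : Val) : Lit → Prop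
  | .obj p => p ∈ T
  | .k p => ∀ T' ∈ M, p ∈ T'
  | .khat p => ∃ T' ∈ M, p ∈ T'

def setSatB (M : Set Val) (T : Val) : BLit → Prop
  | .pos l => setSatLit M T l
  | .neg l => ¬ setSatLit M T l
  | .top => True
  | .bot => False

def setSatRule (M : Set Val) (T : Val) (r : Rule) : Prop :=
  (∀ b ∈ r.body, setSatB M T b) → ∃ l ∈ r.head, setSatLit M T l

def setSatProg (M : Set Val) (T : Val) (P : Program) : Prop :=
  ∀ r ∈ P, setSatRule M T r

/-- Reduct of a body conjunct w.r.t. the pointed S5-model `(M, T)`: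
`not λ` becomes ⊥ if `(M,T) ⊨ λ` and ⊤ otherwise; other conjuncts are unchanged. -/
noncomputable def reductB (M : Set Val) (T : Val) : BLit → BLit
  | .pos l => .pos l
  | .neg l => if setSatLit M T l then .bot else .top
  | .top => .top
  | .bot => .bot

/-- The reduct `Π^⟨M,T⟩` of an EASP program w.r.t. the pointed S5-model `(M, T)`. -/
noncomputable def reduct (M : Set Val) (T : Val) (P : Program) : Program :=
  P.map (fun r => ⟨r.head, r.body.map (reductB M T)⟩)

/-- `(M,T) ⊨*_f P` : `(M,T)` satisfies `P` and no functional weakening of `M` at `T`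
(a map `h` with `h T ⊊ T` and `h T' = T'` for `T' ∈ M`, `T' ≠ T`) satisfies `P`
at the point `h T` in the model `h '' M`. -/
def satStarF (M : Set Val) (T : Val) (P : Program) : Prop :=
  setSatProg M T P ∧
    ∀ h : Val → Val, h T ⊂ T → (∀ T' ∈ M, T' ≠ T → h T' = T') →
      ¬ setSatProg (h '' M) (h T) P

/-- `(M,T) ⊨*_r P` : `(M,T)` satisfies `P` and for every relational weakening
`S` of `M` at `T` (a nonempty set of subsets of `T` containing a strict subset of `T`),
some designated point `H ∈ S` refutes `P` in the model `(M \ {T}) ∪ S`. -/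
def satStarR (M : Set Val) (T : Val) (P : Program) : Prop :=
  setSatProg M T P ∧
    ∀ S : Set Val, S.Nonempty → (∀ H ∈ S, H ⊆ T) → (∃ H ∈ S, H ⊂ T) →
      ∃ H ∈ S, ¬ setSatProg ((M \ {T}) ∪ S) H P

/-- `M` is a tfunctional-minimal model of `P`. -/
def tfunMinimal (M : Set Val) (P : Program) : Prop :=
  M.Nonempty ∧ ∀ T ∈ M, satStarF M T (reduct M T P)

/-- `M` is a trelational-minimal model of `P`. -/
def trelMinimal (M : Set Val) (P : Program) : Prop :=
  M.Nonempty ∧ ∀ T ∈ M, satStarR M T (reduct M T P)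

theorem image_eq_insert_sdiff_singleton {α : Type*} {M : Set α} {T : α} (f : α → α)
    (hT : T ∈ M) (hf : ∀ T' ∈ M, T' ≠ T → f T' = T') :
    f '' M = insert (f T) (M \ {T}) := by
  have hfix : Set.EqOn f id (M \ {T}) := fun T' ⟨hT'M, hT'T⟩ => hf T' hT'M hT'T
  conv_lhs => rw [← Set.insert_sdiff_self_of_mem hT]
  rw [Set.image_insert_eq, hfix.image_eq_self]

theorem satStarF_of_satStarR {M : Set Val} {T : Val} {P : Program} (hT : T ∈ M)
    (hR : satStarR M T P) : satStarF M T P := by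
  refine ⟨hR.1, fun h hsub hfix hsat => ?_⟩
  -- A functional weakening at `T` is the relational weakening `{h T}`.
  obtain ⟨H, rfl, hH⟩ := hR.2 {h T} (Set.singleton_nonempty _)
    (fun H hH => hH ▸ hsub.subset) ⟨h T, rfl, hsub⟩
  rw [Set.union_singleton, ← image_eq_insert_sdiff_singleton h hT hfix] at hH
  exact hH hsat

/-- every trelational-minimal model is a tfunctional-minimal model. -/
theorem stmt2 (P : Program) (M : Set Val) :
    trelMinimal M P → tfunMinimal M P :=
  fun ⟨hne, hrel⟩ => ⟨hne, fun T hT => satStarF_of_satStarR hT (hrel T hT)⟩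

end EASP
end

section
/- Let a, b be distinct atoms and let Φ be the EASP program consisting of the three rules: a ∨ b; a ← K b; b ← K a. Then the S5-model {{a,b}} is a tfunctional-minimal model of Φ but not a trelational-minimal model of Φ; hence the converse of the implication 'trelational-minimal implies tfunctional-minimal' fails. -/
/-!
In a one-world model the rules `a ← K b` and `b ← K a` act as `a ↔ b`, so together with
`a ∨ b` they force the world to contain both atoms; hence no functional weakening of
`{{a, b}}` is a model. A relational weakening may instead split the world into `{a}` and
`{b}`: there `K a` and `K b` are false, so only `a ∨ b` remains, and it holds at both worlds.
-/

attribute [local instance] Classical.propDecidable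

namespace EASP

/-- The program Φ = { a ∨ b ;  a ← K b ;  b ← K a }. -/
def Phi (a b : ℕ) : Program :=
  [⟨[.obj a, .obj b], []⟩,
   ⟨[.obj a], [.pos (.k b)]⟩,
   ⟨[.obj b], [.pos (.k a)]⟩]

theorem satStarF_singleton_iff {T : Val} {P : Program} :
    satStarF {T} T P ↔ setSatProg {T} T P ∧ ∀ U ⊂ T, ¬ setSatProg {U} U P := by
  refine and_congr_right fun _ => ⟨fun h U hU => ?_, fun h f hf _ => ?_⟩
  · simpa using h (fun _ => U) hU (by simp)
  · simpa using h (f T) hf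

theorem reduct_Phi (M : Set Val) (T : Val) (a b : ℕ) : reduct M T (Phi a b) = Phi a b := rfl

theorem setSatProg_Phi_iff {M : Set Val} {T : Val} {a b : ℕ} :
    setSatProg M T (Phi a b) ↔
      (a ∈ T ∨ b ∈ T) ∧ ((∀ T' ∈ M, b ∈ T') → a ∈ T) ∧ ((∀ T' ∈ M, a ∈ T') → b ∈ T) := by
  simp [setSatProg, Phi, setSatRule, setSatB, setSatLit]

theorem setSatProg_singleton_Phi_iff {T : Val} {a b : ℕ} :
    setSatProg {T} T (Phi a b) ↔ a ∈ T ∧ b ∈ T := by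
  rw [setSatProg_Phi_iff]
  simp only [Set.mem_singleton_iff, forall_eq]
  tauto

theorem setSatProg_Phi_of_mem_pair_singletons {a b : ℕ} (hab : a ≠ b) {H : Val}
    (hH : H ∈ ({{a}, {b}} : Set Val)) : setSatProg {{a}, {b}} H (Phi a b) := by
  refine setSatProg_Phi_iff.2 ⟨?_, fun hK => absurd (hK {a} (by simp)) hab.symm,
    fun hK => absurd (hK {b} (by simp)) hab⟩
  rcases hH with rfl | rfl <;> simp

/-- {{a,b}} is tfunctional-minimal for Φ but not trelational-minimal. -/
theorem stmt3 (a b : ℕ) (hab : a ≠ b) :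
    tfunMinimal {({a, b} : Val)} (Phi a b) ∧
      ¬ trelMinimal {({a, b} : Val)} (Phi a b) := by
  refine ⟨⟨Set.singleton_nonempty _, ?_⟩, ?_⟩
  · rintro T rfl
    rw [reduct_Phi, satStarF_singleton_iff, setSatProg_singleton_Phi_iff]
    refine ⟨⟨by simp, by simp⟩, fun U hU hsat => hU.2 ?_⟩
    obtain ⟨ha, hb⟩ := setSatProg_singleton_Phi_iff.1 hsat
    exact Set.insert_subset ha (Set.singleton_subset_iff.2 hb)
  · rintro ⟨-, hmin⟩
    obtain ⟨-, hweak⟩ := hmin {a, b} rfl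
    rw [reduct_Phi] at hweak
    have ha_ssubset : ({a} : Val) ⊂ {a, b} := by
      rw [Set.pair_comm]
      exact Set.ssubset_insert (Set.mem_singleton_iff.not.2 hab.symm)
    obtain ⟨H, hH, hfail⟩ := hweak {{a}, {b}} (Set.insert_nonempty _ _)
      (by rintro H (rfl | rfl) <;> simp) ⟨{a}, by simp, ha_ssubset⟩
    rw [Set.sdiff_self, Set.empty_union] at hfail
    exact hfail (setSatProg_Phi_of_mem_pair_singletons hab hH)

end EASP
end

section
/- Let Π be an EASP program and 𝒯 a nonempty collection of valuations. Then 𝒯 is a functional epistemic equilibrium model (EEM) of the translation Π* if and only if: (i) (𝒯,T) ⊨ Π^⟨𝒯,T⟩ for every T ∈ 𝒯, and (ii) for every subset function h on 𝒯 with h ≠ id there exists T′ ∈ 𝒯 such that the indexed family (h(T))_{T∈𝒯}, viewed as an S5-model (treated as a multiset, so K p holds iff p ∈ h(T) for all T ∈ 𝒯 and K̂ p iff p ∈ h(T) for some T ∈ 𝒯), does not satisfy the reduct Π^⟨𝒯,T′⟩ at the point h(T′). -/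
attribute [local instance] Classical.propDecidable

namespace EASP

/-- EHT formulas. -/
inductive Fml : Type where
  | atom : ℕ → Fml
  | bot : Fml
  | and : Fml → Fml → Fml
  | or : Fml → Fml → Fml
  | imp : Fml → Fml → Fml
  | k : Fml → Fml
  | khat : Fml → Fml

/-- EHT negation `¬φ := φ → ⊥`. -/
def Fml.neg (φ : Fml) : Fml := .imp φ .bot

/-- EHT truth `⊤ := ¬⊥`. -/
def Fml.top : Fml := Fml.neg .bot

/-- Satisfaction in a functional EHT-model `⟨M, h⟩` at a point `T`. -/
def ehtSat (M : Set Val) : (Val → Val) → Val → Fml → Prop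
  | h, T, .atom p => p ∈ h T
  | _, _, .bot => False
  | h, T, .and φ ψ => ehtSat M h T φ ∧ ehtSat M h T ψ
  | h, T, .or φ ψ => ehtSat M h T φ ∨ ehtSat M h T ψ
  | h, T, .imp φ ψ =>
      (ehtSat M h T φ → ehtSat M h T ψ) ∧ (ehtSat M id T φ → ehtSat M id T ψ)
  | h, _, .k φ => ∀ T' ∈ M, ehtSat M h T' φ
  | h, _, .khat φ => ∃ T' ∈ M, ehtSat M h T' φ

/-- Translation of an EASP literal into an EHT formula. -/
def Lit.toFml : Lit → Fml
  | .obj p => .atom p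
  | .k p => .k (.atom p)
  | .khat p => .khat (.atom p)

/-- Translation of a body conjunct into an EHT formula (`not` becomes EHT `¬`). -/
def BLit.toFml : BLit → Fml
  | .pos l => l.toFml
  | .neg l => Fml.neg l.toFml
  | .top => Fml.top
  | .bot => .bot

/-- Translation of a rule into the EHT implication body → head. -/
def Rule.toFml (r : Rule) : Fml :=
  .imp (r.body.foldr (fun b acc => .and b.toFml acc) Fml.top)
       (r.head.foldr (fun l acc => .or l.toFml acc) .bot)

/-- The translation `Π*` of an EASP program: the conjunction of its rules. -/
def translate (P : Program) : Fml :=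
  P.foldr (fun r acc => .and r.toFml acc) Fml.top

/-- `M` is a functional epistemic equilibrium model (EEM) of the EHT formula `φ`. -/
def funEEM (M : Set Val) (φ : Fml) : Prop :=
  (∀ T ∈ M, ehtSat M id T φ) ∧
    ∀ h : Val → Val, (∀ T ∈ M, h T ⊆ T) → (∃ T ∈ M, h T ≠ T) →
      ∃ T ∈ M, ¬ ehtSat M h T φ

/-! An EHT implication holds at `⟨M, h⟩, T` iff it holds "here" (in `h`) and "there" (in `id`).
Evaluated here, the translation of a rule is the rule itself read in the family `h(T)`, except
that a negated literal `¬λ` also has to fail there, i.e. in `(M, T)`; by persistence (`h ⊆ id`)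
this second condition implies the first, so `¬λ` behaves exactly like its reduct w.r.t. `(M, T)`.
Evaluated there, the same argument with `h = id` gives satisfaction of the reduct in `(M, T)`. -/

noncomputable def reductRule (M : Set Val) (T : Val) (r : Rule) : Rule :=
  ⟨r.head, r.body.map (reductB M T)⟩

theorem reduct_eq_map (M : Set Val) (T : Val) (P : Program) :
    reduct M T P = P.map (reductRule M T) :=
  rfl

section FamilySatisfaction

variable {M : Set Val}

theorem famSatLit_mono {ι : Type} {W W' : ι → Val} {S S' : Val} (hW : ∀ i, W i ⊆ W' i)
    (hS : S ⊆ S') {l : Lit} (hl : famSatLit W S l) : famSatLit W' S' l := by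
  cases l with
  | obj p => exact hS hl
  | k p => exact fun i => hW i (hl i)
  | khat p => obtain ⟨i, hp⟩ := hl; exact ⟨i, hW i hp⟩

theorem famSatLit_subtypeVal_iff (T : Val) (l : Lit) :
    famSatLit (fun x : M => x.1) T l ↔ setSatLit M T l := by
  cases l <;> simp [famSatLit, setSatLit]

theorem famSatProg_subtypeVal_iff (T : Val) (P : Program) :
    famSatProg (fun x : M => x.1) T P ↔ setSatProg M T P := by
  refine forall₂_congr fun r _ => imp_congr (forall₂_congr fun b _ => ?_)
    (exists_congr fun l => and_congr_right fun _ => famSatLit_subtypeVal_iff T l)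
  cases b with
  | pos l => exact famSatLit_subtypeVal_iff T l
  | neg l => exact not_congr (famSatLit_subtypeVal_iff T l)
  | top => rfl
  | bot => rfl

end FamilySatisfaction

section EHTSatisfaction

variable {M : Set Val} {h : Val → Val} {T : Val}

theorem ehtSat_top : ehtSat M h T Fml.top := by
  simp [Fml.top, Fml.neg, ehtSat]

theorem ehtSat_toFml_iff_famSatLit (l : Lit) :
    ehtSat M h T l.toFml ↔ famSatLit (fun x : M => h x) (h T) l := by
  cases l <;> simp [Lit.toFml, ehtSat, famSatLit]

theorem ehtSat_foldr_and (L : List BLit) :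
    ehtSat M h T (L.foldr (fun b acc => .and b.toFml acc) Fml.top) ↔
      ∀ b ∈ L, ehtSat M h T b.toFml := by
  induction L with
  | nil => simp [ehtSat_top]
  | cons a L ih => simp [ehtSat, ih]

theorem ehtSat_foldr_or (L : List Lit) :
    ehtSat M h T (L.foldr (fun l acc => .or l.toFml acc) .bot) ↔
      ∃ l ∈ L, ehtSat M h T l.toFml := by
  induction L with
  | nil => simp [ehtSat]
  | cons a L ih => simp [ehtSat, ih]

theorem ehtSat_translate (P : Program) :
    ehtSat M h T (translate P) ↔ ∀ r ∈ P, ehtSat M h T r.toFml := by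
  induction P with
  | nil => simp [translate, ehtSat_top]
  | cons r P ih => rw [List.forall_mem_cons, ← ih]; rfl

variable (hh : ∀ T ∈ M, h T ⊆ T) (hT : T ∈ M)
include hh hT

theorem ehtSat_toFml_iff_famSatB_reductB (b : BLit) :
    ehtSat M h T b.toFml ↔ famSatB (fun x : M => h x) (h T) (reductB M T b) := by
  cases b with
  | pos l => exact ehtSat_toFml_iff_famSatLit l
  | neg l =>
    have persist : famSatLit (fun x : M => h x) (h T) l → setSatLit M T l := fun H =>
      (famSatLit_subtypeVal_iff T l).mp (famSatLit_mono (fun x : M => hh x.1 x.2) (hh T hT) H)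
    have there : ehtSat M id T l.toFml ↔ setSatLit M T l :=
      (ehtSat_toFml_iff_famSatLit l).trans (famSatLit_subtypeVal_iff T l)
    simp only [BLit.toFml, Fml.neg, ehtSat, ehtSat_toFml_iff_famSatLit l, reductB] at there ⊢
    rw [there]
    split_ifs with hs
    · simp [famSatB, hs]
    · simpa [famSatB, hs] using mt persist hs
  | top => exact iff_of_true ehtSat_top trivial
  | bot => exact Iff.rfl

theorem ehtSat_body_imp_head_iff_famSatRule (r : Rule) :
    (ehtSat M h T (r.body.foldr (fun b acc => .and b.toFml acc) Fml.top) →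
        ehtSat M h T (r.head.foldr (fun l acc => .or l.toFml acc) .bot)) ↔
      famSatRule (fun x : M => h x) (h T) (reductRule M T r) := by
  simp only [ehtSat_foldr_and, ehtSat_foldr_or, famSatRule, reductRule, List.forall_mem_map,
    ehtSat_toFml_iff_famSatB_reductB hh hT, ehtSat_toFml_iff_famSatLit]

theorem ehtSat_translate_iff (P : Program) :
    ehtSat M h T (translate P) ↔
      famSatProg (fun x : M => h x) (h T) (reduct M T P) ∧
        setSatProg M T (reduct M T P) := by
  have id_le : ∀ T ∈ M, id T ⊆ T := fun _ _ => subset_rfl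
  rw [← famSatProg_subtypeVal_iff, ehtSat_translate]
  simp only [famSatProg, reduct_eq_map, List.forall_mem_map, ← forall₂_and]
  refine forall₂_congr fun r _ => and_congr ?_ ?_
  · exact ehtSat_body_imp_head_iff_famSatRule hh hT r
  · exact ehtSat_body_imp_head_iff_famSatRule id_le hT r

end EHTSatisfaction

theorem ehtSat_id_translate_iff {M : Set Val} {T : Val} (hT : T ∈ M) (P : Program) :
    ehtSat M id T (translate P) ↔ setSatProg M T (reduct M T P) := by
  rw [ehtSat_translate_iff (h := id) (fun _ _ => subset_rfl) hT P]
  exact (and_congr_left' (famSatProg_subtypeVal_iff T _)).trans and_self_iff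

theorem stmt4_general (P : Program) (M : Set Val) :
    funEEM M (translate P) ↔
      ((∀ T ∈ M, setSatProg M T (reduct M T P)) ∧
        ∀ h : Val → Val, (∀ T ∈ M, h T ⊆ T) → (∃ T ∈ M, h T ≠ T) →
          ∃ T' ∈ M, ¬ famSatProg (fun x : M => h x.1) (h T') (reduct M T' P)) := by
  have there : (∀ T ∈ M, ehtSat M id T (translate P)) ↔
      ∀ T ∈ M, setSatProg M T (reduct M T P) :=
    forall₂_congr fun T hT => ehtSat_id_translate_iff hT P
  rw [funEEM, there]
  refine and_congr_right fun hsat => forall_congr' fun h => imp_congr_right fun hh =>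
    imp_congr_right fun _ => exists_congr fun T => and_congr_right fun hT => not_congr ?_
  exact (ehtSat_translate_iff hh hT P).trans (and_iff_left (hsat T hT))

/-- functional EEMs of `Π*` characterised via reducts in EASP. -/
theorem stmt4 (P : Program) (M : Set Val) (hne : M.Nonempty) :
    funEEM M (translate P) ↔
      ((∀ T ∈ M, setSatProg M T (reduct M T P)) ∧
        ∀ h : Val → Val, (∀ T ∈ M, h T ⊆ T) → (∃ T ∈ M, h T ≠ T) →
          ∃ T' ∈ M, ¬ famSatProg (fun x : M => h x.1) (h T') (reduct M T' P)) :=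
  stmt4_general P M

end EASP
end

section
/- For every EHT formula φ, the formulas ¬K¬φ, ¬¬K̂φ, and K̂¬¬φ are pairwise EHT-equivalent: for every functional EHT-model ⟨𝒯,h⟩ and every T ∈ 𝒯, ⟨𝒯,h⟩,T ⊨ ¬K¬φ iff ⟨𝒯,h⟩,T ⊨ ¬¬K̂φ iff ⟨𝒯,h⟩,T ⊨ K̂¬¬φ. -/
/-! Satisfaction is persistent: whatever holds in ⟨𝒯, h⟩ at `T` holds in ⟨𝒯, id⟩ at `T`.
Hence `¬ψ` holds in ⟨𝒯, h⟩ at `T` exactly when `ψ` fails in ⟨𝒯, id⟩ at `T`, and the model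
⟨𝒯, id⟩ is classical. All three formulas therefore reduce to `K̂φ` evaluated in ⟨𝒯, id⟩. -/
attribute [local instance] Classical.propDecidable

namespace EASP

theorem ehtSat_id_of_ehtSat {M : Set Val} {h : Val → Val} (hsub : ∀ T ∈ M, h T ⊆ T) :
    ∀ {φ : Fml} {T : Val}, T ∈ M → ehtSat M h T φ → ehtSat M id T φ
  | .atom _, T, hT, hp => hsub T hT hp
  | .bot, _, _, hp => hp
  | .and _ _, _, hT, ⟨hφ, hψ⟩ => ⟨ehtSat_id_of_ehtSat hsub hT hφ, ehtSat_id_of_ehtSat hsub hT hψ⟩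
  | .or _ _, _, hT, .inl hφ => .inl (ehtSat_id_of_ehtSat hsub hT hφ)
  | .or _ _, _, hT, .inr hψ => .inr (ehtSat_id_of_ehtSat hsub hT hψ)
  | .imp _ _, _, _, ⟨_, hthere⟩ => ⟨hthere, hthere⟩
  | .k _, _, _, hall => fun T' hT' => ehtSat_id_of_ehtSat hsub hT' (hall T' hT')
  | .khat _, _, _, ⟨T', hT', hφ⟩ => ⟨T', hT', ehtSat_id_of_ehtSat hsub hT' hφ⟩

section

variable {M : Set Val} {h : Val → Val} {φ : Fml} {T : Val}

theorem ehtSat_neg_iff (hsub : ∀ T ∈ M, h T ⊆ T) (hT : T ∈ M) :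
    ehtSat M h T φ.neg ↔ ¬ ehtSat M id T φ := by
  simp only [Fml.neg, ehtSat, imp_false]
  exact ⟨And.right, fun hthere => ⟨fun hhere => hthere (ehtSat_id_of_ehtSat hsub hT hhere), hthere⟩⟩

theorem ehtSat_id_neg_iff (hT : T ∈ M) : ehtSat M id T φ.neg ↔ ¬ ehtSat M id T φ :=
  ehtSat_neg_iff (fun _ _ => subset_rfl) hT

theorem ehtSat_neg_neg_iff (hsub : ∀ T ∈ M, h T ⊆ T) (hT : T ∈ M) :
    ehtSat M h T φ.neg.neg ↔ ehtSat M id T φ := by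
  rw [ehtSat_neg_iff hsub hT, ehtSat_id_neg_iff hT, not_not]

theorem ehtSat_neg_k_neg_iff (hsub : ∀ T ∈ M, h T ⊆ T) (hT : T ∈ M) :
    ehtSat M h T (Fml.k φ.neg).neg ↔ ehtSat M id T (.khat φ) := by
  rw [ehtSat_neg_iff hsub hT]
  simp only [ehtSat, not_forall, exists_prop]
  exact exists_congr fun _ => and_congr_right fun hT' => by rw [ehtSat_id_neg_iff hT', not_not]

theorem ehtSat_khat_neg_neg_iff (hsub : ∀ T ∈ M, h T ⊆ T) :
    ehtSat M h T (Fml.khat φ.neg.neg) ↔ ehtSat M id T (.khat φ) :=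
  exists_congr fun _ => and_congr_right fun hT' => ehtSat_neg_neg_iff hsub hT'

end

theorem stmt9_general (φ : Fml) (M : Set Val)
    (h : Val → Val) (hsub : ∀ T ∈ M, h T ⊆ T) (T : Val) (hT : T ∈ M) :
    (ehtSat M h T (Fml.neg (.k (Fml.neg φ))) ↔
      ehtSat M h T (Fml.neg (Fml.neg (.khat φ)))) ∧
    (ehtSat M h T (Fml.neg (Fml.neg (.khat φ))) ↔
      ehtSat M h T (.khat (Fml.neg (Fml.neg φ)))) := by
  rw [ehtSat_neg_k_neg_iff hsub hT, ehtSat_neg_neg_iff hsub hT, ehtSat_khat_neg_neg_iff hsub]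
  exact ⟨Iff.rfl, Iff.rfl⟩

/-- ¬K¬φ, ¬¬K̂φ and K̂¬¬φ are pairwise EHT-equivalent. -/
theorem stmt9 (φ : Fml) (M : Set Val) (hne : M.Nonempty)
    (h : Val → Val) (hsub : ∀ T ∈ M, h T ⊆ T) (T : Val) (hT : T ∈ M) :
    (ehtSat M h T (Fml.neg (.k (Fml.neg φ))) ↔
      ehtSat M h T (Fml.neg (Fml.neg (.khat φ)))) ∧
    (ehtSat M h T (Fml.neg (Fml.neg (.khat φ))) ↔
      ehtSat M h T (.khat (Fml.neg (Fml.neg φ)))) :=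
  stmt9_general φ M h hsub T hT

end EASP
end

section
/- Let a, b, c, d be distinct atoms and let Σ be the positive EASP program consisting of the four rules: a ∨ b; c ← b; d ← K a; ⊥ ← K̂ d. Then both S5-models {{a},{b,c}} and {{b,c}} are tfunctional-minimal models of Σ. -/
/-!
Σ has no default negation, so every reduct of Σ is Σ itself. Both models satisfy Σ because
no world contains `d` and the world `{b, c}` refutes `K a`. Minimality holds for an objective
reason: a strict subset of `{a}` or of `{b, c}` violates `a ∨ b` or `c ← b` whatever the
surrounding model is, so no functional weakening can satisfy Σ.
-/

attribute [local instance] Classical.propDecidable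

namespace EASP

/-- The positive program Σ = { a ∨ b ;  c ← b ;  d ← K a ;  ⊥ ← K̂ d }. -/
def Sig (a b c d : ℕ) : Program :=
  [⟨[.obj a, .obj b], []⟩,
   ⟨[.obj c], [.pos (.obj b)]⟩,
   ⟨[.obj d], [.pos (.k a)]⟩,
   ⟨[], [.pos (.khat d)]⟩]

def IsPositive (P : Program) : Prop :=
  ∀ r ∈ P, ∀ l, BLit.neg l ∉ r.body

theorem reduct_eq_self_of_isPositive {P : Program} (hP : IsPositive P) (M : Set Val) (T : Val) :
    reduct M T P = P := by
  refine (List.map_congr_left fun r hr => ?_).trans (List.map_id P)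
  obtain ⟨head, body⟩ := r
  suffices body.map (reductB M T) = body by simp [this]
  refine (List.map_congr_left fun l hl => ?_).trans (List.map_id body)
  cases l with
  | neg l => exact absurd hl (hP _ hr l)
  | _ => rfl

theorem satStarF_of_forall_ssubset {M : Set Val} {T : Val} {P : Program}
    (hT : setSatProg M T P) (hmin : ∀ H ⊂ T, ∀ N, ¬ setSatProg N H P) : satStarF M T P :=
  ⟨hT, fun h hh _ => hmin (h T) hh _⟩

theorem tfunMinimal_of_isPositive {M : Set Val} {P : Program} (hP : IsPositive P)
    (hM : M.Nonempty) (hsat : ∀ T ∈ M, setSatProg M T P)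
    (hmin : ∀ T ∈ M, ∀ H ⊂ T, ∀ N, ¬ setSatProg N H P) : tfunMinimal M P := by
  refine ⟨hM, fun T hT => ?_⟩
  rw [reduct_eq_self_of_isPositive hP]
  exact satStarF_of_forall_ssubset (hsat T hT) (hmin T hT)

section Sig

variable {a b c d : ℕ}

theorem isPositive_sig : IsPositive (Sig a b c d) := by
  simp [IsPositive, Sig]

theorem setSatProg_sig_iff {M : Set Val} {T : Val} :
    setSatProg M T (Sig a b c d) ↔
      (a ∈ T ∨ b ∈ T) ∧ (b ∈ T → c ∈ T) ∧ ((∀ T' ∈ M, a ∈ T') → d ∈ T) ∧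
        ∀ T' ∈ M, d ∉ T' := by
  simp [setSatProg, Sig, setSatRule, setSatB, setSatLit]

theorem not_setSatProg_sig_of_ssubset_singleton {N : Set Val} {H : Val} (hH : H ⊂ {a}) :
    ¬ setSatProg N H (Sig a b c d) := by
  rw [Set.ssubset_singleton_iff.mp hH, setSatProg_sig_iff]
  simp

theorem not_setSatProg_sig_of_ssubset_pair (hab : a ≠ b) (hac : a ≠ c) {N : Set Val} {H : Val}
    (hH : H ⊂ {b, c}) : ¬ setSatProg N H (Sig a b c d) := by
  rw [setSatProg_sig_iff]
  rintro ⟨ha | hb, hbc, -⟩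
  · rcases hH.1 ha with h | h <;> simp_all
  · exact hH.2 (Set.insert_subset hb (Set.singleton_subset_iff.mpr (hbc hb)))

theorem tfunMinimal_sig (hab : a ≠ b) (hac : a ≠ c) (had : a ≠ d) (hbd : b ≠ d) (hcd : c ≠ d)
    {M : Set Val} (hbcM : {b, c} ∈ M) (hM : M ⊆ {{a}, {b, c}}) : tfunMinimal M (Sig a b c d) := by
  have hworld : ∀ T ∈ M, T = {a} ∨ T = {b, c} := fun T hT => hM hT
  refine tfunMinimal_of_isPositive isPositive_sig ⟨_, hbcM⟩ (fun T hT => ?_) (fun T hT H hH _ => ?_)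
  · rw [setSatProg_sig_iff]
    refine ⟨?_, ?_, fun hK => absurd (hK _ hbcM) (by simp [hab, hac]), fun T' hT' => ?_⟩
    · rcases hworld T hT with rfl | rfl <;> simp
    · rcases hworld T hT with rfl | rfl <;> simp [hab.symm]
    · rcases hworld T' hT' with rfl | rfl <;> simp [had.symm, hbd.symm, hcd.symm]
  · rcases hworld T hT with rfl | rfl
    · exact not_setSatProg_sig_of_ssubset_singleton hH
    · exact not_setSatProg_sig_of_ssubset_pair hab hac hH

end Sig

theorem stmt12_general (a b c d : ℕ)
    (hab : a ≠ b) (hac : a ≠ c) (had : a ≠ d)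
    (hbd : b ≠ d) (hcd : c ≠ d) :
    tfunMinimal {({a} : Val), ({b, c} : Val)} (Sig a b c d) ∧
      tfunMinimal {({b, c} : Val)} (Sig a b c d) :=
  ⟨tfunMinimal_sig hab hac had hbd hcd (by simp) subset_rfl,
    tfunMinimal_sig hab hac had hbd hcd rfl (by simp)⟩

/-- {{a},{b,c}} and {{b,c}} are tfunctional-minimal models of Σ. -/
theorem stmt12 (a b c d : ℕ)
    (hab : a ≠ b) (hac : a ≠ c) (had : a ≠ d)
    (hbc : b ≠ c) (hbd : b ≠ d) (hcd : c ≠ d) :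
    tfunMinimal {({a} : Val), ({b, c} : Val)} (Sig a b c d) ∧
      tfunMinimal {({b, c} : Val)} (Sig a b c d) :=
  stmt12_general a b c d hab hac had hbd hcd

end EASP
end

section
/- Let a, b, c, d be distinct atoms and let Γ be the EASP program consisting of the four rules: a ∨ b; c ← K̂ a ∧ not b; d ← not (K a) ∧ b; ⊥ ← not (K̂ c). Then both S5-models {{a,c},{b,d}} and {{a,c}} are tfunctional-minimal models of Γ. -/
attribute [local instance] Classical.propDecidable

namespace EASP

/-- The program Γ = { a ∨ b ;  c ← K̂ a ∧ not b ;  d ← not (K a) ∧ b ;  ⊥ ← not (K̂ c) }. -/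
def Gam (a b c d : ℕ) : Program :=
  [⟨[.obj a, .obj b], []⟩,
   ⟨[.obj c], [.pos (.khat a), .neg (.obj b)]⟩,
   ⟨[.obj d], [.neg (.k a), .pos (.obj b)]⟩,
   ⟨[], [.neg (.khat c)]⟩]

/-!
A functional weakening at `T` replaces `T` by some `U ⊊ T` that remains a world of the weakened
model, so it suffices that every such `U` satisfying the reduct contains `T`. At `{a, c}` the rule
`a ∨ b` forces `a ∈ U` because `b ∉ {a, c}`; then `K̂ a` holds and, `not b` having become `⊤`, the
second rule forces `c`. At `{b, d}` it forces `b ∈ U`, and since `K a` fails in the original model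
the reduct of the third rule is `d ← b`.
-/

@[simp]
theorem setSatB_reductB_neg {M N : Set Val} {T U : Val} {l : Lit} :
    setSatB N U (reductB M T (.neg l)) ↔ ¬ setSatLit M T l := by
  by_cases hl : setSatLit M T l <;> simp [reductB, setSatB, hl]

theorem setSatProg_reduct_Gam_iff {a b c d : ℕ} {M N : Set Val} {T U : Val} :
    setSatProg N U (reduct M T (Gam a b c d)) ↔
      (a ∈ U ∨ b ∈ U) ∧ ((∃ V ∈ N, a ∈ V) → b ∉ T → c ∈ U) ∧
        ((∃ V ∈ M, a ∉ V) → b ∈ U → d ∈ U) ∧ ∃ V ∈ M, c ∈ V := by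
  simp [setSatProg, reduct, Gam, setSatRule, reductB.eq_1, setSatB.eq_1, setSatLit]

theorem satStarF_of_forall_subset {M : Set Val} {T : Val} {P : Program} (hT : T ∈ M)
    (hsat : setSatProg M T P)
    (hmin : ∀ (N : Set Val) (U : Val), U ∈ N → U ⊆ T → setSatProg N U P → T ⊆ U) :
    satStarF M T P :=
  ⟨hsat, fun h hsub _ hN => hsub.not_subset (hmin _ _ (Set.mem_image_of_mem h hT) hsub.subset hN)⟩

theorem satStarF_Gam_ac {a b c d : ℕ} {M : Set Val} (hab : a ≠ b) (hbc : b ≠ c)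
    (hM : ({a, c} : Val) ∈ M) :
    satStarF M {a, c} (reduct M {a, c} (Gam a b c d)) := by
  have hb : b ∉ ({a, c} : Val) := by simp [hab.symm, hbc]
  refine satStarF_of_forall_subset hM (setSatProg_reduct_Gam_iff.2 ⟨by simp, fun _ _ => by simp,
    fun _ h => absurd h hb, _, hM, by simp⟩) fun _ U hU hUT hsat => ?_
  obtain ⟨hab_U, hc_U, -, -⟩ := setSatProg_reduct_Gam_iff.1 hsat
  have ha : a ∈ U := hab_U.resolve_right (fun h => hb (hUT h))
  have hc : c ∈ U := hc_U ⟨U, hU, ha⟩ hb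
  simp [Set.insert_subset_iff, ha, hc]

theorem satStarF_Gam_bd {a b c d : ℕ} {M : Set Val} (hab : a ≠ b) (had : a ≠ d)
    (hM : ({b, d} : Val) ∈ M) (hc : ∃ V ∈ M, c ∈ V) :
    satStarF M {b, d} (reduct M {b, d} (Gam a b c d)) := by
  have ha : a ∉ ({b, d} : Val) := by simp [hab, had]
  have hKa : ∃ V ∈ M, a ∉ V := ⟨_, hM, ha⟩
  refine satStarF_of_forall_subset hM (setSatProg_reduct_Gam_iff.2 ⟨by simp,
    fun _ h => absurd (by simp) h, fun _ _ => by simp, hc⟩) fun _ U _ hUT hsat => ?_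
  obtain ⟨hab_U, -, hd_U, -⟩ := setSatProg_reduct_Gam_iff.1 hsat
  have hb : b ∈ U := hab_U.resolve_left (fun h => ha (hUT h))
  simp [Set.insert_subset_iff, hb, hd_U hKa hb]

theorem stmt13_general (a b c d : ℕ)
    (hab : a ≠ b) (had : a ≠ d) (hbc : b ≠ c) :
    tfunMinimal {({a, c} : Val), ({b, d} : Val)} (Gam a b c d) ∧
      tfunMinimal {({a, c} : Val)} (Gam a b c d) := by
  refine ⟨⟨⟨_, Set.mem_insert _ _⟩, ?_⟩, ⟨_, rfl⟩, ?_⟩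
  · rintro T (rfl | rfl)
    · exact satStarF_Gam_ac hab hbc (Set.mem_insert _ _)
    · exact satStarF_Gam_bd hab had (by simp) ⟨_, Set.mem_insert _ _, by simp⟩
  · rintro T rfl
    exact satStarF_Gam_ac hab hbc rfl

/-- {{a,c},{b,d}} and {{a,c}} are tfunctional-minimal models of Γ. -/
theorem stmt13 (a b c d : ℕ)
    (hab : a ≠ b) (hac : a ≠ c) (had : a ≠ d)
    (hbc : b ≠ c) (hbd : b ≠ d) (hcd : c ≠ d) :
    tfunMinimal {({a, c} : Val), ({b, d} : Val)} (Gam a b c d) ∧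
      tfunMinimal {({a, c} : Val)} (Gam a b c d) :=
  stmt13_general a b c d hab had hbc

end EASP
end

section
/- Let p be an atom and let Π be the program consisting of the single rule p ← K p. Then the S5-model {{p}} is an ES94 world-view of Π, but {{p}} is not a tfunctional-minimal model of Π (viewed as an EASP program). -/
attribute [local instance] Classical.propDecidable

namespace EASP

/-- Atoms of non-epistemic programs: atoms and the constants ⊤/⊥. -/
inductive NAt : Type where
  | atom : ℕ → NAt
  | top : NAt
  | bot : NAt

/-- Body conjuncts of non-epistemic programs: `a` or `not a`. -/
inductive NB : Type where
  | pos : NAt → NB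
  | neg : NAt → NB

/-- A non-epistemic rule. -/
structure NRule : Type where
  head : List ℕ
  body : List NB

abbrev NProgram := List NRule

def natSat (T : Val) : NAt → Prop
  | .atom p => p ∈ T
  | .top => True
  | .bot => False

def nbSat (T : Val) : NB → Prop
  | .pos a => natSat T a
  | .neg a => ¬ natSat T a

def nruleSat (T : Val) (r : NRule) : Prop :=
  (∀ b ∈ r.body, nbSat T b) → ∃ p ∈ r.head, p ∈ T

/-- Classical satisfaction of a non-epistemic program by a valuation. -/
def nprogSat (T : Val) (P : NProgram) : Prop := ∀ r ∈ P, nruleSat T r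

/-- ASP reduct of a body conjunct: `not a` becomes ⊤ if `T ⊭ a`, ⊥ otherwise. -/
noncomputable def aspReductB (T : Val) : NB → NB
  | .pos a => .pos a
  | .neg a => if natSat T a then .pos .bot else .pos .top

/-- The ASP reduct `P^T` of a non-epistemic program. -/
noncomputable def aspReduct (T : Val) (P : NProgram) : NProgram :=
  P.map (fun r => ⟨r.head, r.body.map (aspReductB T)⟩)

/-- `T` is a stable model of `P`: `T ⊨ P^T` and no `H ⊊ T` satisfies `P^T`. -/
def stable (P : NProgram) (T : Val) : Prop :=
  nprogSat T (aspReduct T P) ∧ ∀ H, H ⊂ T → ¬ nprogSat H (aspReduct T P)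

/-- `AS P`: the set of stable models of `P`. -/
def AS (P : NProgram) : Set Val := {T | stable P T}

/-- Atoms of ES-programs: atoms and the subjective literals `K p`, `M p`. -/
inductive EAt : Type where
  | atom : ℕ → EAt
  | k : ℕ → EAt
  | m : ℕ → EAt

/-- Body conjuncts of ES-rules: `a` or `not a`. -/
inductive EB : Type where
  | pos : EAt → EB
  | neg : EAt → EB

/-- An ES-rule: head is a disjunction of atoms. -/
structure ERule : Type where
  head : List ℕ
  body : List EB

abbrev EProgram := List ERule

/-- ES94 epistemic reduct on atoms: `K p` becomes ⊤ if `p` holds in every world of `M`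
and ⊥ otherwise; `M p` becomes ⊤ if `p` holds in some world of `M` and ⊥ otherwise. -/
noncomputable def epAt (M : Set Val) : EAt → NAt
  | .atom p => .atom p
  | .k p => if ∀ T ∈ M, p ∈ T then .top else .bot
  | .m p => if ∃ T ∈ M, p ∈ T then .top else .bot

noncomputable def epB (M : Set Val) : EB → NB
  | .pos a => .pos (epAt M a)
  | .neg a => .neg (epAt M a)

/-- The ES94 epistemic reduct `Π^M` of an ES-program. -/
noncomputable def epReduct (M : Set Val) (P : EProgram) : NProgram :=
  P.map (fun r => ⟨r.head, r.body.map (epB M)⟩)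

/-- `M` is an ES94 world-view of `P` iff `M` is nonempty and `M = AS (P^M)`. -/
def worldView (P : EProgram) (M : Set Val) : Prop :=
  M.Nonempty ∧ M = AS (epReduct M P)

/-! The rule `p ← K p` is self-supporting under ES94: the reduct w.r.t. `{{p}}` is the fact
`p ← ⊤`, whose only stable model is `{p}`. Under EASP, the functional weakening that shrinks the
only world `{p}` to `∅` also falsifies `K p`, so the rule holds vacuously in the weakened model and
`{{p}}` is not minimal. -/

lemma aspReduct_eq_self (T : Val) {P : NProgram} (hP : ∀ r ∈ P, ∀ b ∈ r.body, ∀ a, b ≠ .neg a) :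
    aspReduct T P = P := by
  refine (List.map_congr_left fun r hr => ?_).trans (List.map_id P)
  suffices r.body.map (aspReductB T) = r.body by simp [this]
  refine (List.map_congr_left fun b hb => ?_).trans (List.map_id _)
  cases b with
  | pos a => rfl
  | neg a => exact absurd rfl (hP r hr _ hb a)

lemma reduct_eq_self (M : Set Val) (T : Val) {P : Program}
    (hP : ∀ r ∈ P, ∀ b ∈ r.body, ∀ l, b ≠ .neg l) : reduct M T P = P := by
  refine (List.map_congr_left fun r hr => ?_).trans (List.map_id P)
  suffices r.body.map (reductB M T) = r.body by simp [this]
  refine (List.map_congr_left fun b hb => ?_).trans (List.map_id _)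
  cases b with
  | neg l => exact absurd rfl (hP r hr _ hb l)
  | _ => rfl

lemma epAt_k_eq_top {M : Set Val} {p : ℕ} (h : ∀ T ∈ M, p ∈ T) : epAt M (.k p) = .top :=
  if_pos h

lemma nprogSat_fact_iff {H : Val} {p : ℕ} : nprogSat H [⟨[p], [.pos .top]⟩] ↔ p ∈ H := by
  simp [nprogSat, nruleSat, nbSat, natSat]

lemma AS_fact (p : ℕ) : AS [⟨[p], [.pos .top]⟩] = {({p} : Val)} := by
  ext T
  simp only [AS, stable, Set.mem_ofPred_eq, Set.mem_singleton_iff,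
    aspReduct_eq_self T (P := [⟨[p], [.pos .top]⟩]) (by simp), nprogSat_fact_iff]
  constructor
  · rintro ⟨hpT, hmin⟩
    by_contra hne
    exact hmin {p} ((Set.singleton_subset_iff.2 hpT).ssubset_of_ne (Ne.symm hne)) rfl
  · rintro rfl
    exact ⟨rfl, fun H hH hpH => hH.2 (Set.singleton_subset_iff.2 hpH)⟩

lemma not_satStarF_singleton {T : Val} {P : Program} (hT : T.Nonempty)
    (hP : setSatProg {∅} ∅ P) : ¬ satStarF {T} T P := by
  rintro ⟨-, hweak⟩
  refine hweak (fun _ => ∅) hT.empty_ssubset (fun T' hT' hne => absurd hT' hne) ?_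
  simpa [Set.image_singleton] using hP

lemma setSatProg_empty_K_rule (p : ℕ) :
    setSatProg {∅} ∅ [⟨[.obj p], [.pos (.k p)]⟩] := by
  simp [setSatProg, setSatRule, setSatB, setSatLit]

/-- {{p}} is an ES94 world-view of { p ← K p } but not a
tfunctional-minimal model of it (viewed as an EASP program). -/
theorem stmt16 (p : ℕ) :
    worldView [⟨[p], [.pos (.k p)]⟩] {({p} : Val)} ∧
      ¬ tfunMinimal {({p} : Val)} ([⟨[.obj p], [.pos (.k p)]⟩] : Program) := by
  constructor
  · have hred : epReduct {({p} : Val)} [⟨[p], [.pos (.k p)]⟩] = [⟨[p], [.pos .top]⟩] := by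
      simp [epReduct, epB, epAt_k_eq_top]
    exact ⟨Set.singleton_nonempty _, by rw [hred, AS_fact]⟩
  · rintro ⟨-, hmin⟩
    have hstar := hmin {p} rfl
    rw [reduct_eq_self _ _ (by simp)] at hstar
    exact not_satStarF_singleton (Set.singleton_nonempty p) (setSatProg_empty_K_rule p) hstar

end EASP
end
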